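/- Let F be a harmonic function on a simply connected open set U ⊆ ℝ² and p ∈ U. Then there exist a simply connected open neighborhood V ⊆ U of p and a harmonic function G : V → ℝ with nonvanishing gradient such that F = G + log(‖∇G‖) on V. -/

import Mathlib

open Real

/-- Partial derivative in the first coordinate. -/
noncomputable def pdx (F : ℝ × ℝ → ℝ) (p : ℝ × ℝ) : ℝ := fderiv ℝ F p (1, 0)

/-- Partial derivative in the second coordinate. -/
noncomputable def pdy (F : ℝ × ℝ → ℝ) (p : ℝ × ℝ) : ℝ := fderiv ℝ F p (0, 1)

/-- `F` is harmonic on `U`: it is `C²` there and its Laplacian vanishes. -/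
def HarmonicOn2 (F : ℝ × ℝ → ℝ) (U : Set (ℝ × ℝ)) : Prop :=
  ContDiffOn ℝ 2 F U ∧ ∀ p ∈ U, pdx (pdx F) p + pdy (pdy F) p = 0

/-!
Identify `ℝ × ℝ` with `ℂ` through `equivRealProdCLM`. On a disc around `p`, `F = Re f` with `f`
holomorphic. A primitive `ψ` of `exp f` with `ψ p = 1` stays in the slit plane near `p`, so
`g = log ψ` solves `g' = exp (f - g)`, that is `f = g + log g'`. By Cauchy–Riemann the gradient
of `G = Re g` is `(Re g', -Im g')`, whence `log ‖∇G‖ = Re (f - g) = F - G`.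
-/

open Complex Metric Set Topology InnerProductSpace Laplacian

lemma pdx_pdx_eq_fderiv_fderiv {F : ℝ × ℝ → ℝ} {q : ℝ × ℝ}
    (hF : DifferentiableAt ℝ (fderiv ℝ F) q) :
    pdx (pdx F) q = fderiv ℝ (fderiv ℝ F) q (1, 0) (1, 0) := by
  change fderiv ℝ (fun y => fderiv ℝ F y (1, 0)) q (1, 0) = _
  simp [fderiv_clm_apply hF (differentiableAt_const _)]

lemma pdy_pdy_eq_fderiv_fderiv {F : ℝ × ℝ → ℝ} {q : ℝ × ℝ}
    (hF : DifferentiableAt ℝ (fderiv ℝ F) q) :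
    pdy (pdy F) q = fderiv ℝ (fderiv ℝ F) q (0, 1) (0, 1) := by
  change fderiv ℝ (fun y => fderiv ℝ F y (0, 1)) q (0, 1) = _
  simp [fderiv_clm_apply hF (differentiableAt_const _)]

lemma laplacian_comp_equivRealProdCLM {F : ℝ × ℝ → ℝ} {z : ℂ}
    (hF : ContDiffAt ℝ 2 F (equivRealProdCLM z)) :
    Δ (F ∘ equivRealProdCLM) z =
      pdx (pdx F) (equivRealProdCLM z) + pdy (pdy F) (equivRealProdCLM z) := by
  have hF' : DifferentiableAt ℝ (fderiv ℝ F) (equivRealProdCLM z) :=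
    (hF.fderiv_right le_rfl).differentiableAt one_ne_zero
  have h := equivRealProdCLM.iteratedFDerivWithin_comp_right F uniqueDiffOn_univ
    (mem_univ (equivRealProdCLM z)) 2
  simp only [preimage_univ, iteratedFDerivWithin_univ] at h
  rw [laplacian_eq_iteratedFDeriv_complexPlane]
  dsimp only
  rw [h, pdx_pdx_eq_fderiv_fderiv hF', pdy_pdy_eq_fderiv_fderiv hF']
  simp [iteratedFDeriv_two_apply]

theorem harmonicOn2_iff_harmonicOnNhd_comp {F : ℝ × ℝ → ℝ} {U : Set (ℝ × ℝ)}
    (hU : IsOpen U) :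
    HarmonicOn2 F U ↔ HarmonicOnNhd (F ∘ equivRealProdCLM) (equivRealProdCLM ⁻¹' U) := by
  have hU' : IsOpen (equivRealProdCLM ⁻¹' U) := hU.preimage equivRealProdCLM.continuous
  constructor
  · rintro ⟨hF, hΔ⟩ z hz
    refine ⟨(hF.contDiffAt (hU.mem_nhds hz)).comp z equivRealProdCLM.contDiff.contDiffAt, ?_⟩
    filter_upwards [hU'.mem_nhds hz] with w hw
    rw [laplacian_comp_equivRealProdCLM (hF.contDiffAt (hU.mem_nhds hw)), hΔ _ hw,
      Pi.zero_apply]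
  · intro h
    have hF : ContDiffOn ℝ 2 F U := by
      have := h.contDiffOn.comp equivRealProdCLM.symm.contDiff.contDiffOn
        (fun q (hq : q ∈ U) => by simpa using hq)
      simpa [Function.comp_def] using this
    refine ⟨hF, fun q hq => ?_⟩
    have hq' : equivRealProdCLM (equivRealProdCLM.symm q) ∈ U := by simpa using hq
    have := laplacian_comp_equivRealProdCLM (hF.contDiffAt (hU.mem_nhds hq'))
    rw [(h _ hq').2.self_of_nhds] at this
    simpa using this.symm

lemma hasFDerivAt_re_comp_symm {u : ℂ → ℂ} {q : ℝ × ℝ} {D : ℂ}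
    (hu : HasDerivAt u D (equivRealProdCLM.symm q)) :
    HasFDerivAt (fun q => (u (equivRealProdCLM.symm q)).re)
      (reCLM.comp (((ContinuousLinearMap.toSpanSingleton ℂ D).restrictScalars ℝ).comp
        equivRealProdCLM.symm.toContinuousLinearMap)) q :=
  reCLM.hasFDerivAt.comp q ((hu.hasFDerivAt.restrictScalars ℝ).comp q
    equivRealProdCLM.symm.hasFDerivAt)

lemma pdx_re_comp_symm {u : ℂ → ℂ} {q : ℝ × ℝ} {D : ℂ}
    (hu : HasDerivAt u D (equivRealProdCLM.symm q)) :
    pdx (fun q => (u (equivRealProdCLM.symm q)).re) q = D.re := by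
  simp [pdx, (hasFDerivAt_re_comp_symm hu).fderiv]

lemma pdy_re_comp_symm {u : ℂ → ℂ} {q : ℝ × ℝ} {D : ℂ}
    (hu : HasDerivAt u D (equivRealProdCLM.symm q)) :
    pdy (fun q => (u (equivRealProdCLM.symm q)).re) q = -D.im := by
  simp [pdy, (hasFDerivAt_re_comp_symm hu).fderiv]

theorem DifferentiableOn.harmonicOn2_re_comp_symm {g : ℂ → ℂ} {S : Set ℂ} (hS : IsOpen S)
    (hg : DifferentiableOn ℂ g S) :
    HarmonicOn2 (fun q => (g (equivRealProdCLM.symm q)).re)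
      (equivRealProdCLM.symm ⁻¹' S) := by
  rw [harmonicOn2_iff_harmonicOnNhd_comp (hS.preimage equivRealProdCLM.symm.continuous)]
  intro z hz
  simp only [mem_preimage, ContinuousLinearEquiv.symm_apply_apply] at hz
  simpa only [Function.comp_def, ContinuousLinearEquiv.symm_apply_apply]
    using (hg.analyticAt (hS.mem_nhds hz)).harmonicAt_re

theorem exists_hasDerivAt_eq_cexp_sub {f : ℂ → ℂ} {c : ℂ} {r : ℝ} (hr : 0 < r)
    (hf : DifferentiableOn ℂ f (ball c r)) :
    ∃ ρ ∈ Ioc 0 r, ∃ g : ℂ → ℂ,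
      ∀ z ∈ ball c ρ, HasDerivAt g (cexp (f z - g z)) z := by
  obtain ⟨ψ, hψc, hψ⟩ := hf.cexp.isExactOn_ball.with_val_at c 1
  have hslit : ψ ⁻¹' slitPlane ∈ 𝓝 c :=
    (hψ c (mem_ball_self hr)).continuousAt.preimage_mem_nhds
      (isOpen_slitPlane.mem_nhds (hψc ▸ one_mem_slitPlane))
  obtain ⟨δ, hδ, hδψ⟩ := Metric.mem_nhds_iff.mp hslit
  refine ⟨min δ r, ⟨lt_min hδ hr, min_le_right _ _⟩, fun z => log (ψ z), fun z hz => ?_⟩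
  have hzψ : ψ z ∈ slitPlane := hδψ (ball_subset_ball (min_le_left _ _) hz)
  convert (hψ z (ball_subset_ball (min_le_right _ _) hz)).clog hzψ using 1
  rw [Complex.exp_sub, exp_log (slitPlane_ne_zero hzψ)]

lemma simplyConnectedSpace_preimage_symm_ball {c : ℂ} {ρ : ℝ} (hρ : 0 < ρ) :
    SimplyConnectedSpace (equivRealProdCLM.symm ⁻¹' ball c ρ : Set (ℝ × ℝ)) := by
  have hconv : Convex ℝ (equivRealProdCLM.symm ⁻¹' ball c ρ : Set (ℝ × ℝ)) :=
    (convex_ball c ρ).linear_preimage equivRealProdCLM.symm.toLinearMap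
  have hc : equivRealProdCLM.symm (equivRealProdCLM c) ∈ ball c ρ := by
    rw [ContinuousLinearEquiv.symm_apply_apply]
    exact mem_ball_self hρ
  have := hconv.contractibleSpace ⟨_, hc⟩
  infer_instance

theorem minding_lemma_real_general
    (U : Set (ℝ × ℝ)) (hU : IsOpen U)
    (F : ℝ × ℝ → ℝ) (hF : HarmonicOn2 F U) (p : ℝ × ℝ) (hp : p ∈ U) :
    ∃ (V : Set (ℝ × ℝ)) (G : ℝ × ℝ → ℝ),
      IsOpen V ∧ SimplyConnectedSpace V ∧ p ∈ V ∧ V ⊆ U ∧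
      HarmonicOn2 G V ∧
      (∀ q ∈ V, (pdx G q, pdy G q) ≠ (0, 0)) ∧
      (∀ q ∈ V, F q = G q + Real.log (Real.sqrt ((pdx G q) ^ 2 + (pdy G q) ^ 2))) := by
  obtain ⟨r, hr, hrU⟩ := Metric.isOpen_iff.mp (hU.preimage equivRealProdCLM.continuous)
    (equivRealProdCLM.symm p) (by simpa)
  obtain ⟨f, hf, hre⟩ :=
    (((harmonicOn2_iff_harmonicOnNhd_comp hU).mp hF).mono hrU).exists_analyticOnNhd_ball_re_eq
  obtain ⟨ρ, ⟨hρ, hρr⟩, g, hg⟩ := exists_hasDerivAt_eq_cexp_sub hr hf.differentiableOn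
  refine ⟨equivRealProdCLM.symm ⁻¹' ball (equivRealProdCLM.symm p) ρ,
    fun q => (g (equivRealProdCLM.symm q)).re,
    isOpen_ball.preimage equivRealProdCLM.symm.continuous,
    simplyConnectedSpace_preimage_symm_ball hρ, mem_ball_self hρ,
    fun q hq => by simpa using hrU (ball_subset_ball hρr hq),
    DifferentiableOn.harmonicOn2_re_comp_symm isOpen_ball
      fun z hz => (hg z hz).differentiableAt.differentiableWithinAt,
    fun q hq => ?_, fun q hq => ?_⟩
  · rw [pdx_re_comp_symm (hg _ hq), pdy_re_comp_symm (hg _ hq), Ne, Prod.mk.injEq, neg_eq_zero]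
    exact fun h0 => Complex.exp_ne_zero _ (Complex.ext h0.1 h0.2)
  · have hFq : (f (equivRealProdCLM.symm q)).re = F q := by
      simpa only [Function.comp_apply, equivRealProdCLM.apply_symm_apply]
        using hre (ball_subset_ball hρr hq)
    rw [pdx_re_comp_symm (hg _ hq), pdy_re_comp_symm (hg _ hq), neg_sq,
      ← norm_eq_sqrt_sq_add_sq, norm_exp, Real.log_exp, sub_re, hFq, add_sub_cancel]

/-- Lemma 1: a harmonic `F` on a simply connected open `U` can locally be written
as `G + log ‖∇G‖` with `G` harmonic and `∇G` nonvanishing. -/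
theorem minding_lemma_real
    (U : Set (ℝ × ℝ)) (hU : IsOpen U) (hsc : SimplyConnectedSpace U)
    (F : ℝ × ℝ → ℝ) (hF : HarmonicOn2 F U) (p : ℝ × ℝ) (hp : p ∈ U) :
    ∃ (V : Set (ℝ × ℝ)) (G : ℝ × ℝ → ℝ),
      IsOpen V ∧ SimplyConnectedSpace V ∧ p ∈ V ∧ V ⊆ U ∧
      HarmonicOn2 G V ∧
      (∀ q ∈ V, (pdx G q, pdy G q) ≠ (0, 0)) ∧
      (∀ q ∈ V, F q = G q + Real.log (Real.sqrt ((pdx G q) ^ 2 + (pdy G q) ^ 2))) :=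
  minding_lemma_real_general U hU F hF p hp
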